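/- With f, g and the differential Sylvester matrix V = V(f,g) as above, the degree in ∂ of gcrd(f,g) equals the dimension of the left nullspace of V over R(t). -/

import Mathlib

/-!
Right multiplication by a nonzero operator adds degrees in `ℝ(t)[∂;′]`, so right division with
remainder works and the left ideal generated by `f` and `g` is principal; its generators are the
greatest common right divisors `h`, of degree `k`.

The rows of `V(f,g)` are the coefficient vectors of `∂^i f` (`i < n`) and `∂^j g` (`j < m`),
so its row space is `{u f + v g : deg u < n, deg v < m}`. This is the set of all elements of the
ideal of degree `< m + n`: a syzygy `a f + b g = 0` with `a ≠ 0`, `deg a ≤ n`, which exists by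
counting dimensions, lets one reduce `u` modulo `a`. Hence the row space is
`{t h : deg t < m + n - k}`, of dimension `m + n - k`, and the left nullspace has dimension `k`.
-/

open Polynomial

/-- Derivative d/dt on the field of real rational functions. -/
noncomputable def ratDeriv (q : RatFunc ℝ) : RatFunc ℝ :=
  (algebraMap (Polynomial ℝ) (RatFunc ℝ) (derivative q.num) *
      algebraMap (Polynomial ℝ) (RatFunc ℝ) q.denom -
    algebraMap (Polynomial ℝ) (RatFunc ℝ) q.num *
      algebraMap (Polynomial ℝ) (RatFunc ℝ) (derivative q.denom)) /
    (algebraMap (Polynomial ℝ) (RatFunc ℝ) q.denom) ^ 2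

/-- Left multiplication by ∂ in R(t)[∂;′]: ∂·(a∂^i) = a∂^(i+1) + a′∂^i. -/
noncomputable def dMul (g : Polynomial (RatFunc ℝ)) : Polynomial (RatFunc ℝ) :=
  X * g + g.sum fun i a => C (ratDeriv a) * X ^ i

/-- The skew (Ore) multiplication in R(t)[∂;′]. -/
noncomputable def skewMul (f g : Polynomial (RatFunc ℝ)) : Polynomial (RatFunc ℝ) :=
  f.sum fun i a => C a * dMul^[i] g


/-- h divides f on the right in R(t)[∂;′]. -/
def SkewRightDvd (h f : Polynomial (RatFunc ℝ)) : Prop := ∃ u, f = skewMul u h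

/-- h is a greatest common right divisor of f and g. -/
def IsGCRD (f g h : Polynomial (RatFunc ℝ)) : Prop :=
  SkewRightDvd h f ∧ SkewRightDvd h g ∧
    ∀ h2, SkewRightDvd h2 f → SkewRightDvd h2 g → h2.degree ≤ h.degree


/-- The differential Sylvester matrix of f and g: rows are the coefficient
vectors of ∂^i f (0 ≤ i < n) followed by those of ∂^i g (0 ≤ i < m). -/
noncomputable def sylv (f g : Polynomial (RatFunc ℝ)) (m n : ℕ) :
    Matrix (Fin (m + n)) (Fin (m + n)) (RatFunc ℝ) :=
  Matrix.of fun i j =>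
    if (i : ℕ) < n then (dMul^[(i : ℕ)] f).coeff j
    else (dMul^[(i : ℕ) - n] g).coeff j

/-- f has coefficients in R[t] ⊆ R(t). -/
def PolyCoeffs (f : Polynomial (RatFunc ℝ)) : Prop :=
  ∀ i, ∃ p : Polynomial ℝ, f.coeff i = algebraMap (Polynomial ℝ) (RatFunc ℝ) p

local notation "K" => RatFunc ℝ
local notation "φ" => algebraMap ℝ[X] K

lemma ratDeriv_eq_of_eq_div {x : K} {p q : ℝ[X]} (hq : q ≠ 0) (hx : x = φ p / φ q) :
    ratDeriv x = (φ (derivative p) * φ q - φ p * φ (derivative q)) / φ q ^ 2 := by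
  have hD : φ x.denom ≠ 0 := RatFunc.algebraMap_ne_zero x.denom_ne_zero
  have hQ : φ q ≠ 0 := RatFunc.algebraMap_ne_zero hq
  have hcross : φ x.num * φ q = φ p * φ x.denom := by
    rw [← div_eq_div_iff hD hQ, RatFunc.num_div_denom, hx]
  have hpoly : x.num * q = p * x.denom :=
    RatFunc.algebraMap_injective ℝ (by simpa only [map_mul] using hcross)
  have hder := congrArg (fun r => φ (derivative r)) hpoly
  simp only [derivative_mul, map_add, map_mul] at hder
  rw [ratDeriv, div_eq_div_iff (pow_ne_zero 2 hD) (pow_ne_zero 2 hQ)]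
  linear_combination (-(φ (derivative x.denom) * φ q + φ (derivative q) * φ x.denom)) * hcross
    + φ x.denom * φ q * hder

lemma exists_eq_algebraMap_div (x : K) : ∃ p q : ℝ[X], q ≠ 0 ∧ x = φ p / φ q :=
  ⟨x.num, x.denom, x.denom_ne_zero, (RatFunc.num_div_denom x).symm⟩

lemma ratDeriv_add (a b : K) : ratDeriv (a + b) = ratDeriv a + ratDeriv b := by
  obtain ⟨p, q, hq, rfl⟩ := exists_eq_algebraMap_div a
  obtain ⟨r, s, hs, rfl⟩ := exists_eq_algebraMap_div b
  have hQ : φ q ≠ 0 := RatFunc.algebraMap_ne_zero hq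
  have hS : φ s ≠ 0 := RatFunc.algebraMap_ne_zero hs
  rw [ratDeriv_eq_of_eq_div hq rfl, ratDeriv_eq_of_eq_div hs rfl,
    ratDeriv_eq_of_eq_div (mul_ne_zero hq hs) (p := p * s + r * q)
      (by simp only [map_add, map_mul]; field_simp)]
  simp only [derivative_mul, map_add, map_mul]
  field_simp
  ring

lemma ratDeriv_mul (a b : K) : ratDeriv (a * b) = ratDeriv a * b + a * ratDeriv b := by
  obtain ⟨p, q, hq, rfl⟩ := exists_eq_algebraMap_div a
  obtain ⟨r, s, hs, rfl⟩ := exists_eq_algebraMap_div b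
  have hQ : φ q ≠ 0 := RatFunc.algebraMap_ne_zero hq
  have hS : φ s ≠ 0 := RatFunc.algebraMap_ne_zero hs
  rw [ratDeriv_eq_of_eq_div hq rfl, ratDeriv_eq_of_eq_div hs rfl,
    ratDeriv_eq_of_eq_div (mul_ne_zero hq hs) (p := p * r) (by simp only [map_mul]; field_simp)]
  simp only [derivative_mul, map_add, map_mul]
  field_simp
  ring

lemma ratDeriv_zero : ratDeriv 0 = 0 := by
  simpa using ratDeriv_add 0 0

lemma coeff_sum_C_ratDeriv_mul_X_pow (p : K[X]) (j : ℕ) :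
    (p.sum fun i a => C (ratDeriv a) * X ^ i).coeff j = ratDeriv (p.coeff j) := by
  rw [sum_def, finsetSum_coeff]
  simp only [coeff_C_mul_X_pow]
  rw [Finset.sum_ite_eq]
  split_ifs with hj
  · rfl
  · rw [notMem_support_iff.mp hj, ratDeriv_zero]

lemma coeff_dMul_zero (p : K[X]) : (dMul p).coeff 0 = ratDeriv (p.coeff 0) := by
  rw [dMul, coeff_add, coeff_sum_C_ratDeriv_mul_X_pow, coeff_X_mul_zero, zero_add]

lemma coeff_dMul_succ (p : K[X]) (j : ℕ) :
    (dMul p).coeff (j + 1) = p.coeff j + ratDeriv (p.coeff (j + 1)) := by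
  rw [dMul, coeff_add, coeff_sum_C_ratDeriv_mul_X_pow, coeff_X_mul]

lemma dMul_add (p q : K[X]) : dMul (p + q) = dMul p + dMul q := by
  ext (_ | j)
  · simp [coeff_dMul_zero, ratDeriv_add]
  · simp only [coeff_dMul_succ, coeff_add, ratDeriv_add]; ring

lemma dMul_C_mul (a : K) (p : K[X]) : dMul (C a * p) = C a * dMul p + C (ratDeriv a) * p := by
  ext (_ | j)
  · simp only [coeff_dMul_zero, coeff_add, coeff_C_mul, ratDeriv_mul]; ring
  · simp only [coeff_dMul_succ, coeff_add, coeff_C_mul, ratDeriv_mul]; ring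

lemma dMul_monomial (i : ℕ) (a : K) :
    dMul (monomial i a) = monomial (i + 1) a + monomial i (ratDeriv a) := by
  ext (_ | j)
  · simp only [coeff_dMul_zero, coeff_add, coeff_monomial]
    split_ifs <;> simp_all [ratDeriv_zero]
  · simp only [coeff_dMul_succ, coeff_add, coeff_monomial]
    split_ifs <;> simp_all [ratDeriv_zero]

noncomputable def dMulHom : K[X] →+ K[X] := AddMonoidHom.mk' dMul dMul_add

lemma iterate_dMul_add (i : ℕ) (p q : K[X]) : dMul^[i] (p + q) = dMul^[i] p + dMul^[i] q :=
  iterate_map_add dMulHom i p q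

lemma iterate_dMul_zero (i : ℕ) : dMul^[i] (0 : K[X]) = 0 :=
  iterate_map_zero dMulHom i

lemma coeff_dMul_natDegree_succ (p : K[X]) : (dMul p).coeff (p.natDegree + 1) = p.leadingCoeff := by
  rw [coeff_dMul_succ, coeff_eq_zero_of_natDegree_lt (Nat.lt_succ_self _), ratDeriv_zero, add_zero,
    leadingCoeff]

lemma natDegree_dMul_le (p : K[X]) : (dMul p).natDegree ≤ p.natDegree + 1 := by
  refine natDegree_le_iff_coeff_eq_zero.mpr fun j hj => ?_
  obtain ⟨j, rfl⟩ : ∃ i, j = i + 1 := Nat.exists_eq_add_one.mpr (by omega)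
  rw [coeff_dMul_succ, coeff_eq_zero_of_natDegree_lt (by omega),
    coeff_eq_zero_of_natDegree_lt (by omega), ratDeriv_zero, add_zero]

lemma natDegree_dMul {p : K[X]} (hp : p ≠ 0) : (dMul p).natDegree = p.natDegree + 1 :=
  natDegree_eq_of_le_of_coeff_ne_zero (natDegree_dMul_le p)
    (by rwa [coeff_dMul_natDegree_succ, leadingCoeff_ne_zero])

lemma leadingCoeff_dMul {p : K[X]} (hp : p ≠ 0) : (dMul p).leadingCoeff = p.leadingCoeff := by
  rw [leadingCoeff, natDegree_dMul hp, coeff_dMul_natDegree_succ]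

lemma dMul_ne_zero {p : K[X]} (hp : p ≠ 0) : dMul p ≠ 0 := fun h => by
  simpa [h, hp] using (leadingCoeff_dMul hp).symm

lemma natDegree_iterate_dMul_le (p : K[X]) (i : ℕ) :
    (dMul^[i] p).natDegree ≤ p.natDegree + i := by
  induction i with
  | zero => rfl
  | succ i ih =>
    rw [Function.iterate_succ_apply']
    exact (natDegree_dMul_le _).trans (by omega)

lemma iterate_dMul_ne_zero {p : K[X]} (hp : p ≠ 0) (i : ℕ) : dMul^[i] p ≠ 0 := by
  induction i with
  | zero => exact hp
  | succ i ih => rw [Function.iterate_succ_apply']; exact dMul_ne_zero ih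

lemma natDegree_iterate_dMul {p : K[X]} (hp : p ≠ 0) (i : ℕ) :
    (dMul^[i] p).natDegree = p.natDegree + i := by
  induction i with
  | zero => rfl
  | succ i ih =>
    rw [Function.iterate_succ_apply', natDegree_dMul (iterate_dMul_ne_zero hp i), ih, add_assoc]

lemma leadingCoeff_iterate_dMul {p : K[X]} (hp : p ≠ 0) (i : ℕ) :
    (dMul^[i] p).leadingCoeff = p.leadingCoeff := by
  induction i with
  | zero => rfl
  | succ i ih =>
    rw [Function.iterate_succ_apply', leadingCoeff_dMul (iterate_dMul_ne_zero hp i), ih]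

lemma skewMul_monomial (i : ℕ) (a : K) (f : K[X]) : skewMul (monomial i a) f = C a * dMul^[i] f :=
  sum_monomial_index a _ (by simp)

lemma skewMul_eq_sum {p : K[X]} {N : ℕ} (hp : p.natDegree < N) (f : K[X]) :
    skewMul p f = ∑ i ∈ Finset.range N, C (p.coeff i) * dMul^[i] f :=
  sum_over_range' p (fun i => by simp) N hp

lemma skewMul_add_left (p q f : K[X]) : skewMul (p + q) f = skewMul p f + skewMul q f :=
  sum_add_index p q _ (fun i => by simp) (fun i a b => by rw [C_add, add_mul])

lemma skewMul_C_mul (a : K) (p f : K[X]) : skewMul (C a * p) f = C a * skewMul p f := by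
  rw [skewMul, C_mul', sum_smul_index _ _ _ (fun i => by simp), skewMul, sum_def, sum_def,
    Finset.mul_sum]
  simp only [C_mul, mul_assoc]

noncomputable def skewMulRight (f : K[X]) : K[X] →ₗ[K] K[X] where
  toFun p := skewMul p f
  map_add' p q := skewMul_add_left p q f
  map_smul' a p := by simpa only [smul_eq_C_mul, RingHom.id_apply] using skewMul_C_mul a p f

@[simp]
lemma skewMulRight_apply (f p : K[X]) : skewMulRight f p = skewMul p f := rfl

lemma skewMul_zero_left (f : K[X]) : skewMul 0 f = 0 := map_zero (skewMulRight f)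

lemma skewMul_sub_left (p q f : K[X]) : skewMul (p - q) f = skewMul p f - skewMul q f :=
  map_sub (skewMulRight f) p q

lemma skewMul_add_right (p f g : K[X]) : skewMul p (f + g) = skewMul p f + skewMul p g := by
  simp only [skewMul, iterate_dMul_add, mul_add, sum_def, Finset.sum_add_distrib]

lemma skewMul_zero_right (p : K[X]) : skewMul p 0 = 0 := by
  simp only [skewMul, iterate_dMul_zero, mul_zero, sum_def, Finset.sum_const_zero]

lemma dMul_skewMul (p f : K[X]) : dMul (skewMul p f) = skewMul (dMul p) f := by
  induction p using Polynomial.induction_on' with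
  | add p q hp hq => rw [skewMul_add_left, dMul_add, hp, hq, dMul_add, skewMul_add_left]
  | monomial i a =>
    rw [skewMul_monomial, dMul_C_mul, dMul_monomial, skewMul_add_left, skewMul_monomial,
      skewMul_monomial, Function.iterate_succ_apply']

lemma iterate_dMul_skewMul (i : ℕ) (p f : K[X]) :
    dMul^[i] (skewMul p f) = skewMul (dMul^[i] p) f := by
  induction i with
  | zero => rfl
  | succ i ih => rw [Function.iterate_succ_apply', Function.iterate_succ_apply', ih, dMul_skewMul]

lemma skewMul_assoc (u v f : K[X]) : skewMul (skewMul u v) f = skewMul u (skewMul v f) := by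
  induction u using Polynomial.induction_on' with
  | add p q hp hq => rw [skewMul_add_left, skewMul_add_left, skewMul_add_left, hp, hq]
  | monomial i a =>
    rw [skewMul_monomial, skewMul_monomial, skewMul_C_mul, iterate_dMul_skewMul]

lemma skewMul_C (a : K) (f : K[X]) : skewMul (C a) f = C a * f := by
  simpa only [monomial_zero_left, Function.iterate_zero_apply] using skewMul_monomial 0 a f

lemma skewMul_one (f : K[X]) : skewMul 1 f = f := by
  rw [← C_1, skewMul_C, C_1, one_mul]

lemma coeff_skewMul (u f : K[X]) (j : ℕ) :
    (skewMul u f).coeff j =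
      ∑ i ∈ Finset.range (u.natDegree + 1), u.coeff i * (dMul^[i] f).coeff j := by
  simp only [skewMul_eq_sum (Nat.lt_succ_self _), finsetSum_coeff, coeff_C_mul]

lemma natDegree_skewMul_le (u f : K[X]) :
    (skewMul u f).natDegree ≤ u.natDegree + f.natDegree := by
  refine natDegree_le_iff_coeff_eq_zero.mpr fun j hj => ?_
  refine (coeff_skewMul u f j).trans (Finset.sum_eq_zero fun i hi => ?_)
  rw [Finset.mem_range] at hi
  rw [coeff_eq_zero_of_natDegree_lt ((natDegree_iterate_dMul_le f i).trans_lt (by omega)),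
    mul_zero]

lemma coeff_skewMul_natDegree_add (u : K[X]) {f : K[X]} (hf : f ≠ 0) :
    (skewMul u f).coeff (u.natDegree + f.natDegree) = u.leadingCoeff * f.leadingCoeff := by
  rw [coeff_skewMul, Finset.sum_range_succ, Finset.sum_eq_zero, zero_add, leadingCoeff,
    ← leadingCoeff_iterate_dMul hf u.natDegree, leadingCoeff, natDegree_iterate_dMul hf,
    add_comm f.natDegree]
  intro i hi
  rw [Finset.mem_range] at hi
  rw [coeff_eq_zero_of_natDegree_lt (p := dMul^[i] f) (by rw [natDegree_iterate_dMul hf]; omega),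
    mul_zero]

lemma coeff_skewMul_natDegree_add_ne_zero {u f : K[X]} (hu : u ≠ 0) (hf : f ≠ 0) :
    (skewMul u f).coeff (u.natDegree + f.natDegree) ≠ 0 := by
  rw [coeff_skewMul_natDegree_add u hf]
  exact mul_ne_zero (leadingCoeff_ne_zero.2 hu) (leadingCoeff_ne_zero.2 hf)

lemma skewMul_ne_zero {u f : K[X]} (hu : u ≠ 0) (hf : f ≠ 0) : skewMul u f ≠ 0 := fun h => by
  simpa [h] using coeff_skewMul_natDegree_add_ne_zero hu hf

lemma natDegree_skewMul {u f : K[X]} (hu : u ≠ 0) (hf : f ≠ 0) :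
    (skewMul u f).natDegree = u.natDegree + f.natDegree :=
  natDegree_eq_of_le_of_coeff_ne_zero (natDegree_skewMul_le u f)
    (coeff_skewMul_natDegree_add_ne_zero hu hf)

lemma degree_skewMul (u : K[X]) {f : K[X]} (hf : f ≠ 0) :
    (skewMul u f).degree = u.degree + f.degree := by
  rcases eq_or_ne u 0 with rfl | hu
  · simp [skewMul_zero_left]
  rw [degree_eq_natDegree (skewMul_ne_zero hu hf), degree_eq_natDegree hu,
    degree_eq_natDegree hf, natDegree_skewMul hu hf, Nat.cast_add]

lemma skewMul_mem_degreeLT_iff {u f : K[X]} (hf : f ≠ 0) {N : ℕ} :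
    skewMul u f ∈ degreeLT K (N + f.natDegree) ↔ u ∈ degreeLT K N := by
  rw [mem_degreeLT, mem_degreeLT, degree_skewMul u hf, degree_eq_natDegree hf, Nat.cast_add,
    WithBot.add_lt_add_iff_right (WithBot.natCast_ne_bot _)]

lemma skewMul_mem_degreeLT {u : K[X]} {N : ℕ} (hu : u ∈ degreeLT K N) (f : K[X]) :
    skewMul u f ∈ degreeLT K (N + f.natDegree) := by
  rcases eq_or_ne f 0 with rfl | hf
  · rw [skewMul_zero_right]
    exact zero_mem _
  · exact (skewMul_mem_degreeLT_iff hf).2 hu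

lemma exists_eq_skewMul_add (f : K[X]) {h : K[X]} (hh : h ≠ 0) :
    ∃ q r, f = skewMul q h + r ∧ r.degree < h.degree := by
  induction hd : f.degree using WellFoundedLT.induction generalizing f with
  | _ d ih =>
    subst hd
    by_cases hlt : f.degree < h.degree
    · exact ⟨0, f, by rw [skewMul_zero_left, zero_add], hlt⟩
    have hf : f ≠ 0 := fun hf => hlt (by simpa [hf, bot_lt_iff_ne_bot] using hh)
    have hhf : h.natDegree ≤ f.natDegree := natDegree_le_natDegree (not_lt.1 hlt)
    set c := f.leadingCoeff / h.leadingCoeff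
    have hc : c ≠ 0 := div_ne_zero (leadingCoeff_ne_zero.2 hf) (leadingCoeff_ne_zero.2 hh)
    set t := C c * dMul^[f.natDegree - h.natDegree] h
    have htd : t.degree = f.degree := by
      rw [degree_C_mul hc, degree_eq_natDegree (iterate_dMul_ne_zero hh _),
        natDegree_iterate_dMul hh, degree_eq_natDegree hf, Nat.add_sub_cancel' hhf]
    have htl : t.leadingCoeff = f.leadingCoeff := by
      rw [leadingCoeff_mul, leadingCoeff_C, leadingCoeff_iterate_dMul hh,
        div_mul_cancel₀ _ (leadingCoeff_ne_zero.2 hh)]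
    obtain ⟨q, r, hqr, hr⟩ := ih _ (degree_sub_lt_left htd.symm hf htl.symm) (f - t) rfl
    refine ⟨monomial (f.natDegree - h.natDegree) c + q, r, ?_, hr⟩
    rw [skewMul_add_left, skewMul_monomial]
    linear_combination hqr

noncomputable def skewCombination (f g : K[X]) : K[X] × K[X] →ₗ[K] K[X] :=
  (skewMulRight f).coprod (skewMulRight g)

@[simp]
lemma skewCombination_apply (f g : K[X]) (x : K[X] × K[X]) :
    skewCombination f g x = skewMul x.1 f + skewMul x.2 g := rfl

noncomputable def leftIdeal (f g : K[X]) : Submodule K K[X] :=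
  LinearMap.range (skewCombination f g)

lemma mem_leftIdeal {f g p : K[X]} :
    p ∈ leftIdeal f g ↔ ∃ u v, skewMul u f + skewMul v g = p := by
  simp [leftIdeal]

lemma left_mem_leftIdeal (f g : K[X]) : f ∈ leftIdeal f g :=
  mem_leftIdeal.2 ⟨1, 0, by rw [skewMul_one, skewMul_zero_left, add_zero]⟩

lemma right_mem_leftIdeal (f g : K[X]) : g ∈ leftIdeal f g :=
  mem_leftIdeal.2 ⟨0, 1, by rw [skewMul_one, skewMul_zero_left, zero_add]⟩

lemma skewMul_mem_leftIdeal {f g p : K[X]} (t : K[X]) (hp : p ∈ leftIdeal f g) :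
    skewMul t p ∈ leftIdeal f g := by
  obtain ⟨u, v, rfl⟩ := mem_leftIdeal.1 hp
  exact mem_leftIdeal.2 ⟨skewMul t u, skewMul t v, by
    rw [skewMul_add_right, skewMul_assoc, skewMul_assoc]⟩

lemma skewRightDvd_iff_mem_range {h p : K[X]} :
    SkewRightDvd h p ↔ p ∈ LinearMap.range (skewMulRight h) := by
  simp [SkewRightDvd, eq_comm]

lemma ne_zero_of_skewRightDvd {h p : K[X]} (hdvd : SkewRightDvd h p) (hp : p ≠ 0) : h ≠ 0 := by
  rintro rfl
  obtain ⟨u, rfl⟩ := hdvd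
  exact hp (skewMul_zero_right u)

lemma natDegree_le_of_skewRightDvd {h p : K[X]} (hdvd : SkewRightDvd h p) (hp : p ≠ 0) :
    h.natDegree ≤ p.natDegree := by
  have hh := ne_zero_of_skewRightDvd hdvd hp
  obtain ⟨u, rfl⟩ := hdvd
  have hu : u ≠ 0 := by rintro rfl; exact hp (skewMul_zero_left h)
  rw [natDegree_skewMul hu hh]
  omega

lemma leftIdeal_le_range_of_skewRightDvd {f g h : K[X]} (hf : SkewRightDvd h f)
    (hg : SkewRightDvd h g) : leftIdeal f g ≤ LinearMap.range (skewMulRight h) := by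
  obtain ⟨a, rfl⟩ := hf
  obtain ⟨b, rfl⟩ := hg
  rintro _ ⟨⟨u, v⟩, rfl⟩
  exact ⟨skewMul u a + skewMul v b, by
    simp only [skewMulRight_apply, skewCombination_apply, skewMul_add_left, skewMul_assoc]⟩

lemma exists_leftIdeal_eq_range_skewMulRight (f g : K[X]) :
    ∃ d, leftIdeal f g = LinearMap.range (skewMulRight d) := by
  by_cases hI : ∃ p ∈ leftIdeal f g, p ≠ 0
  swap
  · push Not at hI
    exact ⟨0, ((Submodule.eq_bot_iff _).2 hI).trans
      (LinearMap.range_eq_bot.2 (LinearMap.ext skewMul_zero_right)).symm⟩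
  obtain ⟨d, ⟨hdI, hd0⟩, hmin⟩ :=
    (InvImage.wf degree wellFounded_lt).has_min {p | p ∈ leftIdeal f g ∧ p ≠ 0} hI
  refine ⟨d, le_antisymm (fun p hp => ?_) ?_⟩
  · obtain ⟨q, r, rfl, hr⟩ := exists_eq_skewMul_add p hd0
    have hrI : r ∈ leftIdeal f g := by
      simpa using sub_mem hp (skewMul_mem_leftIdeal q hdI)
    obtain rfl : r = 0 := by_contra fun hr0 => hmin r ⟨hrI, hr0⟩ hr
    exact ⟨q, (add_zero _).symm⟩
  · rintro _ ⟨t, rfl⟩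
    exact skewMul_mem_leftIdeal t hdI

lemma leftIdeal_eq_range_of_isGCRD {f g h : K[X]} (hf : f ≠ 0) (hG : IsGCRD f g h) :
    leftIdeal f g = LinearMap.range (skewMulRight h) := by
  obtain ⟨hhf, hhg, hmax⟩ := hG
  obtain ⟨d, hd⟩ := exists_leftIdeal_eq_range_skewMulRight f g
  have hdvd : ∀ p ∈ leftIdeal f g, SkewRightDvd d p := fun p hp =>
    skewRightDvd_iff_mem_range.2 (hd ▸ hp)
  have hdI : d ∈ leftIdeal f g := hd ▸ ⟨1, skewMul_one d⟩
  have hd0 : d ≠ 0 := ne_zero_of_skewRightDvd (hdvd f (left_mem_leftIdeal f g)) hf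
  obtain ⟨c, hc⟩ :=
    skewRightDvd_iff_mem_range.2 (leftIdeal_le_range_of_skewRightDvd hhf hhg hdI)
  -- `d` is a common right divisor, so `deg d ≤ deg h`: the cofactor `c` is a constant
  have hcdeg : c.natDegree = 0 := by
    have hc0 : c ≠ 0 := by rintro rfl; exact hd0 (by rw [hc, skewMul_zero_left])
    have := natDegree_le_natDegree (hmax d (hdvd f (left_mem_leftIdeal f g))
      (hdvd g (right_mem_leftIdeal f g)))
    rw [hc, natDegree_skewMul hc0 (ne_zero_of_skewRightDvd hhf hf)] at this
    omega
  have hhI : h ∈ leftIdeal f g := by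
    rw [eq_C_of_natDegree_eq_zero hcdeg, skewMul_C] at hc
    have hc0 : c.coeff 0 ≠ 0 := fun h0 => hd0 (by rw [hc, h0, C_0, zero_mul])
    have := Submodule.smul_mem _ (c.coeff 0)⁻¹ hdI
    rwa [hc, smul_eq_C_mul, ← mul_assoc, ← C_mul, inv_mul_cancel₀ hc0, C_1, one_mul] at this
  refine le_antisymm (leftIdeal_le_range_of_skewRightDvd hhf hhg) ?_
  rintro _ ⟨t, rfl⟩
  exact skewMul_mem_leftIdeal t hhI

section ofCoeffs

variable (R : Type*) [Semiring R] (N : ℕ)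

noncomputable def ofCoeffs : (Fin N → R) →ₗ[R] R[X] :=
  (degreeLT R N).subtype ∘ₗ (degreeLTEquiv R N).symm.toLinearMap

lemma range_ofCoeffs : LinearMap.range (ofCoeffs R N) = degreeLT R N := by
  rw [ofCoeffs, LinearMap.range_comp, LinearEquiv.range, Submodule.map_top,
    Submodule.range_subtype]

lemma ofCoeffs_injective : Function.Injective (ofCoeffs R N) :=
  Subtype.val_injective.comp (degreeLTEquiv R N).symm.injective

variable {R N}

lemma ofCoeffs_mem_degreeLT (a : Fin N → R) : ofCoeffs R N a ∈ degreeLT R N :=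
  ((degreeLTEquiv R N).symm a).2

lemma ofCoeffs_coeff {p : R[X]} (hp : p ∈ degreeLT R N) :
    ofCoeffs R N (fun i => p.coeff i) = p :=
  congrArg Subtype.val ((degreeLTEquiv R N).symm_apply_apply ⟨p, hp⟩)

end ofCoeffs

lemma skewMul_ofCoeffs {N : ℕ} (a : Fin N → K) (f : K[X]) :
    skewMul (ofCoeffs K N a) f = ∑ i : Fin N, C (a i) * dMul^[i] f := by
  change skewMulRight f (∑ i : Fin N, monomial i (a i)) = _
  simp only [map_sum, skewMulRight_apply, skewMul_monomial]

lemma exists_skewMul_add_skewMul_eq_zero (f : K[X]) {g : K[X]} (hg : g ≠ 0) :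
    ∃ a b, a ≠ 0 ∧ a.degree ≤ ↑g.natDegree ∧ skewMul a f + skewMul b g = 0 := by
  set m := f.natDegree
  set n := g.natDegree
  set Ψ := skewCombination f g ∘ₗ (ofCoeffs K (n + 1)).prodMap (ofCoeffs K (m + 1))
  have hrange : LinearMap.range Ψ ≤ LinearMap.range (ofCoeffs K (m + n + 1)) := by
    rintro _ ⟨⟨a, b⟩, rfl⟩
    rw [range_ofCoeffs]
    change skewMul (ofCoeffs K _ a) f + skewMul (ofCoeffs K _ b) g ∈ _
    refine add_mem ?_ ?_
    · convert skewMul_mem_degreeLT (ofCoeffs_mem_degreeLT a) f using 2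
      omega
    · convert skewMul_mem_degreeLT (ofCoeffs_mem_degreeLT b) g using 2
      omega
  -- `Ψ` maps a space of dimension `m + n + 2` into one of dimension `m + n + 1`
  have hker : LinearMap.ker Ψ ≠ ⊥ := by
    have hrank := Ψ.finrank_range_add_finrank_ker
    have hle := (Submodule.finrank_mono hrange).trans_eq
      (LinearMap.finrank_range_of_inj (ofCoeffs_injective K (m + n + 1)))
    simp only [Module.finrank_prod, Module.finrank_fin_fun] at hrank hle
    exact fun h => by rw [h, finrank_bot] at hrank; omega
  obtain ⟨⟨a, b⟩, hab, hne⟩ := Submodule.exists_mem_ne_zero_of_ne_bot hker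
  refine ⟨ofCoeffs K _ a, ofCoeffs K _ b, fun ha => hne ?_, ?_, hab⟩
  · have ha0 : a = 0 := ofCoeffs_injective K _ (ha.trans (map_zero _).symm)
    have hb : ofCoeffs K _ b = 0 := by
      by_contra hb
      exact skewMul_ne_zero hb hg (by simpa [Ψ, ha, skewMul_zero_left] using hab)
    rw [ha0, ofCoeffs_injective K _ (hb.trans (map_zero _).symm), Prod.mk_zero_zero]
  · exact mem_degreeLE.1 (degreeLT_succ_eq_degreeLE (R := K) ▸ ofCoeffs_mem_degreeLT a)

lemma skewMulRight_injective {h : K[X]} (hh : h ≠ 0) : Function.Injective (skewMulRight h) :=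
  (injective_iff_map_eq_zero _).2 fun _ ht => of_not_not fun ht0 => skewMul_ne_zero ht0 hh ht

lemma finrank_range_skewMulRight_inf_degreeLT {h : K[X]} (hh : h ≠ 0) {N : ℕ}
    (hN : h.natDegree ≤ N) :
    Module.finrank K ↥(LinearMap.range (skewMulRight h) ⊓ degreeLT K N) = N - h.natDegree := by
  obtain ⟨N, rfl⟩ := Nat.exists_eq_add_of_le' hN
  have hmap : LinearMap.range (skewMulRight h) ⊓ degreeLT K (N + h.natDegree) =
      (degreeLT K N).map (skewMulRight h) := by
    ext p
    constructor
    · rintro ⟨⟨t, rfl⟩, ht⟩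
      exact ⟨t, (skewMul_mem_degreeLT_iff hh).1 ht, rfl⟩
    · rintro ⟨t, ht, rfl⟩
      exact ⟨⟨t, rfl⟩, (skewMul_mem_degreeLT_iff hh).2 ht⟩
  rw [hmap, ← (Submodule.equivMapOfInjective _ (skewMulRight_injective hh) _).finrank_eq,
    (degreeLTEquiv K N).finrank_eq, Module.finrank_fin_fun, Nat.add_sub_cancel]

lemma map_skewCombination_prod_degreeLT {f g : K[X]} (hg : g ≠ 0) :
    ((degreeLT K g.natDegree).prod (degreeLT K f.natDegree)).map (skewCombination f g) =
      leftIdeal f g ⊓ degreeLT K (f.natDegree + g.natDegree) := by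
  apply le_antisymm
  · rintro _ ⟨⟨u, v⟩, ⟨hu, hv⟩, rfl⟩
    refine ⟨⟨(u, v), rfl⟩, add_mem ?_ (skewMul_mem_degreeLT hv g)⟩
    rw [add_comm]
    exact skewMul_mem_degreeLT hu f
  rintro _ ⟨hpI, hpdeg⟩
  obtain ⟨u₀, v, rfl⟩ := mem_leftIdeal.1 hpI
  obtain ⟨a, b, ha0, hadeg, hab⟩ := exists_skewMul_add_skewMul_eq_zero f hg
  obtain ⟨q, r, rfl, hr⟩ := exists_eq_skewMul_add u₀ ha0
  -- trade `skewMul q a` in the first cofactor for `-skewMul q b` in the second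
  have hrep : skewMul (skewMul q a + r) f + skewMul v g =
      skewMul r f + skewMul (v - skewMul q b) g := by
    have hsyz : skewMul q (skewMul a f) + skewMul q (skewMul b g) = 0 := by
      rw [← skewMul_add_right, hab, skewMul_zero_right]
    rw [skewMul_add_left, skewMul_sub_left, skewMul_assoc, skewMul_assoc]
    linear_combination hsyz
  have hr' : r ∈ degreeLT K g.natDegree := mem_degreeLT.2 (hr.trans_le hadeg)
  refine ⟨(r, v - skewMul q b), ⟨hr', ?_⟩, hrep.symm⟩
  change _ ∈ degreeLT K f.natDegree
  rw [← skewMul_mem_degreeLT_iff hg]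
  have hrf := skewMul_mem_degreeLT hr' f
  rw [add_comm] at hrf
  simpa [hrep] using sub_mem hpdeg hrf

def sylvIndex (m n : ℕ) : Fin n ⊕ Fin m ≃ Fin (m + n) :=
  finSumFinEquiv.trans (finCongr (add_comm n m))

noncomputable def sylvSplit (m n : ℕ) :
    (Fin (m + n) → K) ≃ₗ[K] (Fin n → K) × (Fin m → K) :=
  (LinearEquiv.funCongrLeft K K (sylvIndex m n)).trans
    (LinearEquiv.sumArrowLequivProdArrow (Fin n) (Fin m) K K)

lemma ofCoeffs_sylv_row {f g : K[X]} {m n : ℕ} (hf : f.natDegree ≤ m) (hg : g.natDegree ≤ n)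
    (i : Fin (m + n)) :
    ofCoeffs K (m + n) (sylv f g m n i) =
      if (i : ℕ) < n then dMul^[i] f else dMul^[i - n] g := by
  have hrow : sylv f g m n i =
      fun j : Fin (m + n) => (if (i : ℕ) < n then dMul^[i] f else dMul^[i - n] g).coeff j := by
    ext j
    simp only [sylv, Matrix.of_apply, apply_ite (coeff · j)]
  have hdeg : (if (i : ℕ) < n then dMul^[i] f else dMul^[i - n] g).natDegree < m + n := by
    have := i.isLt
    split_ifs with hi
    · exact (natDegree_iterate_dMul_le f i).trans_lt (by omega)
    · exact (natDegree_iterate_dMul_le g _).trans_lt (by omega)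
  exact hrow ▸ ofCoeffs_coeff
    (mem_degreeLT.2 (degree_le_natDegree.trans_lt (by exact_mod_cast hdeg)))

lemma ofCoeffs_vecMul_sylv {f g : K[X]} {m n : ℕ} (hf : f.natDegree ≤ m)
    (hg : g.natDegree ≤ n) (w : Fin (m + n) → K) :
    ofCoeffs K (m + n) (Matrix.vecMul w (sylv f g m n)) =
      skewCombination f g ((ofCoeffs K n).prodMap (ofCoeffs K m) (sylvSplit m n w)) := by
  rw [Matrix.vecMul_eq_sum, map_sum, ← (sylvIndex m n).sum_comp, Fintype.sum_sum_type]
  simp [ofCoeffs_sylv_row hf hg, sylvSplit, sylvIndex, skewMul_ofCoeffs, smul_eq_C_mul]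

lemma finrank_range_vecMulLinear_sylv {f g : K[X]} {m n : ℕ} (hf : f.natDegree ≤ m)
    (hg : g.natDegree ≤ n) :
    Module.finrank K (LinearMap.range (Matrix.vecMulLinear (sylv f g m n))) =
      Module.finrank K
        (((degreeLT K n).prod (degreeLT K m)).map (skewCombination f g)) := by
  have hcomp : ofCoeffs K (m + n) ∘ₗ Matrix.vecMulLinear (sylv f g m n) =
      (skewCombination f g ∘ₗ (ofCoeffs K n).prodMap (ofCoeffs K m)) ∘ₗ
        (sylvSplit m n).toLinearMap :=
    LinearMap.ext (ofCoeffs_vecMul_sylv hf hg)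
  have hrange := congrArg LinearMap.range hcomp
  rw [LinearMap.range_comp, LinearMap.range_comp_of_range_eq_top _ (LinearEquiv.range _),
    LinearMap.range_comp, LinearMap.range_prodMap, range_ofCoeffs, range_ofCoeffs] at hrange
  rw [← hrange, ← (Submodule.equivMapOfInjective _ (ofCoeffs_injective K _) _).finrank_eq]

theorem gcrd_degree_eq_left_nullity_general (f g : Polynomial (RatFunc ℝ)) (m n : ℕ)
    (hfd : f.degree = (m : WithBot ℕ)) (hgd : g.degree = (n : WithBot ℕ))
    (h : Polynomial (RatFunc ℝ)) (hG : IsGCRD f g h) :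
    h.natDegree =
      Module.finrank (RatFunc ℝ) (LinearMap.ker (Matrix.vecMulLinear (sylv f g m n))) := by
  have hf : f ≠ 0 := fun h0 => by simp [h0] at hfd
  have hg : g ≠ 0 := fun h0 => by simp [h0] at hgd
  obtain rfl : f.natDegree = m := natDegree_eq_of_degree_eq_some hfd
  obtain rfl : g.natDegree = n := natDegree_eq_of_degree_eq_some hgd
  have hk := natDegree_le_of_skewRightDvd hG.1 hf
  have hrange := finrank_range_vecMulLinear_sylv (le_refl f.natDegree) (le_refl g.natDegree)
  rw [map_skewCombination_prod_degreeLT hg, leftIdeal_eq_range_of_isGCRD hf hG,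
    finrank_range_skewMulRight_inf_degreeLT (ne_zero_of_skewRightDvd hG.1 hf)
      (hk.trans le_self_add)] at hrange
  have hrank :=
    (Matrix.vecMulLinear (sylv f g f.natDegree g.natDegree)).finrank_range_add_finrank_ker
  rw [Module.finrank_fin_fun] at hrank
  omega

/-- deg gcrd(f,g) equals the dimension of the left nullspace of V(f,g) over R(t). -/
theorem gcrd_degree_eq_left_nullity (f g : Polynomial (RatFunc ℝ)) (m n : ℕ)
    (hfd : f.degree = (m : WithBot ℕ)) (hgd : g.degree = (n : WithBot ℕ))
    (hfp : PolyCoeffs f) (hgp : PolyCoeffs g)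
    (h : Polynomial (RatFunc ℝ)) (hG : IsGCRD f g h) :
    h.natDegree =
      Module.finrank (RatFunc ℝ) (LinearMap.ker (Matrix.vecMulLinear (sylv f g m n))) :=
  gcrd_degree_eq_left_nullity_general f g m n hfd hgd h hG
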